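/- Define h_Reul : [0, π/2] → ℝ by h_Reul(t) = 1 − cos t for t ∈ [0, π/3] and h_Reul(t) = √3 sin t − 1 for t ∈ [π/3, π/2]. Then h_Reul ∈ E, ∫₀^{π/2} ( h_Reul(t)² − (1/2) h_Reul'(t)² ) cos t dt = 1 − π/3, and w₀(h_Reul) = 1; consequently 1 + 3F(h_Reul)/w₀(h_Reul)² = 4 − π. -/

import Mathlib

open Real MeasureTheory Set

/-- `h` belongs to the class `E` of functions of class `C^{1,1}` on `[0, π/2]`
(continuously differentiable with Lipschitz continuous derivative) satisfying
`h 0 = 0` and `h' (π/2) = 0`; the function `h'` is the derivative of `h` on `[0, π/2]`. -/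
structure MemE (h h' : ℝ → ℝ) : Prop where
  hasDeriv : ∀ t ∈ Icc (0:ℝ) (π/2), HasDerivWithinAt h (h' t) (Icc (0:ℝ) (π/2)) t
  lipschitz : ∃ K : NNReal, LipschitzOnWith K h' (Icc (0:ℝ) (π/2))
  h_zero : h 0 = 0
  h'_pi_div_two : h' (π/2) = 0

/-- `F(h) = ∫₀^{π/2} (h² − (1/2) h'²) cos t dt`. -/
noncomputable def Ffun (h h' : ℝ → ℝ) : ℝ :=
  ∫ t in (0:ℝ)..(π/2), (h t ^ 2 - (1/2) * h' t ^ 2) * Real.cos t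

/-- `w₀(h) = ess sup_{t ∈ (0, π/2)} |h t + h'' t|`, where `h''` is the (a.e. defined)
second derivative of `h`. -/
noncomputable def w0 (h h'' : ℝ → ℝ) : ℝ :=
  essSup (fun t => |h t + h'' t|) (volume.restrict (Ioo (0:ℝ) (π/2)))

/-- The function corresponding to the rotated Reuleaux triangle. -/
noncomputable def hReul : ℝ → ℝ := fun t =>
  if t ≤ π/3 then 1 - Real.cos t else Real.sqrt 3 * Real.sin t - 1

/-- The derivative of `hReul`. -/
noncomputable def hReul' : ℝ → ℝ := fun t =>
  if t ≤ π/3 then Real.sin t else Real.sqrt 3 * Real.cos t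

/-- The (a.e. defined) second derivative of `hReul`. -/
noncomputable def hReul'' : ℝ → ℝ := fun t =>
  if t ≤ π/3 then Real.cos t else -(Real.sqrt 3 * Real.sin t)

/-! The two trigonometric pieces of `hReul` meet at `π/3` with equal values and equal slopes,
so `hReul` is differentiable everywhere, and `hReul'` is glued from the Lipschitz functions
`sin` and `√3 cos`. On each piece `h + h''` is the constant `1` or `-1`, so `w₀ = 1`; the
integral `F` splits at `π/3` into two integrals of polynomials in `sin t` and `cos t`, which have
explicit primitives and sum to `1 - π/3`. -/

section Piecewise

variable {E : Type*} [NormedAddCommGroup E] [NormedSpace ℝ E] {f g : ℝ → E} {a : ℝ}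

theorem hasDerivAt_ite_le_of_ne {x : ℝ} {f' g' : E} (hx : x ≠ a) (hf : HasDerivAt f f' x)
    (hg : HasDerivAt g g' x) :
    HasDerivAt (fun y => if y ≤ a then f y else g y) (if x ≤ a then f' else g') x := by
  rcases hx.lt_or_gt with hxa | hax
  · rw [if_pos hxa.le]
    refine hf.congr_of_eventuallyEq ?_
    filter_upwards [Iio_mem_nhds hxa] with y hy using if_pos (le_of_lt hy)
  · rw [if_neg hax.not_ge]
    refine hg.congr_of_eventuallyEq ?_
    filter_upwards [Ioi_mem_nhds hax] with y hy using if_neg (not_le.mpr hy)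

theorem hasDerivAt_ite_le_self {d : E} (hf : HasDerivAt f d a) (hg : HasDerivAt g d a)
    (hfg : f a = g a) : HasDerivAt (fun y => if y ≤ a then f y else g y) d a := by
  have left : HasDerivWithinAt (fun y => if y ≤ a then f y else g y) d (Iic a) a :=
    hf.hasDerivWithinAt.congr (fun y hy => if_pos hy) (if_pos le_rfl)
  have right : HasDerivWithinAt (fun y => if y ≤ a then f y else g y) d (Ici a) a := by
    refine hg.hasDerivWithinAt.congr (fun y hy => ?_) (by rw [if_pos le_rfl, hfg])
    rcases (mem_Ici.mp hy).eq_or_lt with rfl | hlt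
    · rw [if_pos le_rfl, hfg]
    · exact if_neg hlt.not_ge
  simpa only [Iic_union_Ici, hasDerivWithinAt_univ] using left.union right

theorem hasDerivAt_ite_le {f' g' : ℝ → E} (hf : ∀ x, HasDerivAt f (f' x) x)
    (hg : ∀ x, HasDerivAt g (g' x) x) (hfg : f a = g a) (hfg' : f' a = g' a) (x : ℝ) :
    HasDerivAt (fun y => if y ≤ a then f y else g y) (if x ≤ a then f' x else g' x) x := by
  rcases eq_or_ne x a with rfl | hx
  · rw [if_pos le_rfl]
    exact hasDerivAt_ite_le_self (hf x) (hfg' ▸ hg x) hfg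
  · exact hasDerivAt_ite_le_of_ne hx (hf x) (hg x)

theorem intervalIntegral.integral_ite_le {μ : Measure ℝ} {b c : ℝ} (hab : a ≤ b)
    (hbc : b ≤ c) (hf : IntervalIntegrable f μ a b) (hg : IntervalIntegrable g μ b c) :
    ∫ x in a..c, (if x ≤ b then f x else g x) ∂μ
      = (∫ x in a..b, f x ∂μ) + ∫ x in b..c, g x ∂μ := by
  have on_left : EqOn (fun x => if x ≤ b then f x else g x) f (uIoc a b) := fun x hx =>
    if_pos (uIoc_of_le hab ▸ hx).2
  have on_right : EqOn (fun x => if x ≤ b then f x else g x) g (uIoc b c) := fun x hx =>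
    if_neg (uIoc_of_le hbc ▸ hx).1.not_ge
  rw [← intervalIntegral.integral_add_adjacent_intervals
      ((intervalIntegrable_congr on_left).mpr hf) ((intervalIntegrable_congr on_right).mpr hg),
    intervalIntegral.integral_congr_ae (.of_forall fun x hx => on_left hx),
    intervalIntegral.integral_congr_ae (.of_forall fun x hx => on_right hx)]

end Piecewise

theorem LipschitzOnWith.ite_le {β : Type*} [PseudoMetricSpace β] {f g : ℝ → β} {a : ℝ}
    {K : NNReal} (hf : LipschitzOnWith K f (Iic a)) (hg : LipschitzOnWith K g (Ici a))
    (hfg : f a = g a) : LipschitzWith K (fun x => if x ≤ a then f x else g x) := by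
  refine LipschitzWith.of_dist_le_mul fun x y => ?_
  wlog hxy : x ≤ y generalizing x y
  · rw [dist_comm, dist_comm x]
    exact this y x (le_of_not_ge hxy)
  rcases le_or_gt y a with hya | hay
  · simp only [if_pos hya, if_pos (hxy.trans hya)]
    exact hf.dist_le_mul x (hxy.trans hya) y hya
  rcases le_or_gt x a with hxa | hax
  · simp only [if_pos hxa, if_neg hay.not_ge]
    calc dist (f x) (g y) ≤ dist (f x) (f a) + dist (g a) (g y) := hfg ▸ dist_triangle _ _ _
      _ ≤ K * dist x a + K * dist a y :=
        add_le_add (hf.dist_le_mul x hxa a self_mem_Iic) (hg.dist_le_mul a self_mem_Ici y hay.le)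
      _ = K * dist x y := by
        rw [Real.dist_eq, Real.dist_eq, Real.dist_eq, abs_of_nonpos (sub_nonpos.mpr hxa),
          abs_of_nonpos (sub_nonpos.mpr hay.le), abs_of_nonpos (sub_nonpos.mpr hxy)]
        ring
  · simp only [if_neg hay.not_ge, if_neg hax.not_ge]
    exact hg.dist_le_mul x hax.le y hay.le

theorem sin_pi_div_three_eq_sqrt_three_mul_cos : sin (π/3) = √3 * cos (π/3) := by
  rw [cos_pi_div_three, sin_pi_div_three]; ring

theorem one_sub_cos_pi_div_three_eq_sqrt_three_mul_sin_sub_one :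
    1 - cos (π/3) = √3 * sin (π/3) - 1 := by
  rw [cos_pi_div_three, sin_pi_div_three]
  linear_combination (-1/2) * sq_sqrt (zero_le_three (α := ℝ))

theorem hasDerivAt_hReul (t : ℝ) : HasDerivAt hReul (hReul' t) t :=
  hasDerivAt_ite_le (fun t => by simpa using (hasDerivAt_cos t).const_sub 1)
    (fun t => ((hasDerivAt_sin t).const_mul √3).sub_const 1)
    one_sub_cos_pi_div_three_eq_sqrt_three_mul_sin_sub_one sin_pi_div_three_eq_sqrt_three_mul_cos t

theorem hasDerivAt_hReul' {t : ℝ} (ht : t ≠ π/3) : HasDerivAt hReul' (hReul'' t) t :=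
  hasDerivAt_ite_le_of_ne ht (hasDerivAt_sin t)
    (by simpa using (hasDerivAt_cos t).const_mul √3)

theorem ae_hasDerivAt_hReul' :
    ∀ᵐ t ∂(volume.restrict (Ioo (0:ℝ) (π/2))), HasDerivAt hReul' (hReul'' t) t :=
  ((countable_singleton (π/3)).ae_notMem _).mono fun _ ht => hasDerivAt_hReul' ht

theorem lipschitzWith_hReul' : LipschitzWith (max 1 ‖√3‖₊) hReul' :=
  LipschitzOnWith.ite_le (lipschitzWith_sin.weaken (le_max_left _ _)).lipschitzOnWith
    (((lipschitzWith_smul √3).comp lipschitzWith_cos).weaken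
      (by rw [mul_one]; exact le_max_right _ _)).lipschitzOnWith
    sin_pi_div_three_eq_sqrt_three_mul_cos

theorem memE_hReul : MemE hReul hReul' where
  hasDeriv t _ := (hasDerivAt_hReul t).hasDerivWithinAt
  lipschitz := ⟨_, lipschitzWith_hReul'.lipschitzOnWith⟩
  h_zero := by simp [hReul, (by positivity : (0:ℝ) ≤ π/3)]
  h'_pi_div_two := by simp [hReul', not_le.mpr (by linarith [pi_pos] : π/3 < π/2)]

theorem integral_reuleaux_first_arc :
    ∫ t in (0:ℝ)..π/3, ((1 - cos t) ^ 2 - 1/2 * sin t ^ 2) * cos t = 9 * √3 / 16 - π/3 := by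
  have primitive (t : ℝ) : HasDerivAt (fun t => 2 * sin t - t - sin t * cos t - sin t ^ 3 / 2)
      (((1 - cos t) ^ 2 - 1/2 * sin t ^ 2) * cos t) t := by
    have hs := hasDerivAt_sin t
    refine ((((hs.const_mul 2).sub (hasDerivAt_id t)).sub (hs.mul (hasDerivAt_cos t))).sub
      ((hs.pow 3).div_const 2)).congr_deriv ?_
    push_cast
    linear_combination (1 - cos t) * sin_sq_add_cos_sq t
  rw [intervalIntegral.integral_eq_sub_of_hasDerivAt (fun t _ => primitive t)
    (Continuous.intervalIntegrable (by fun_prop) _ _)]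
  simp only [sin_pi_div_three, cos_pi_div_three, sin_zero, cos_zero]
  linear_combination (-√3/16) * sq_sqrt (zero_le_three (α := ℝ))

theorem integral_reuleaux_second_arc :
    ∫ t in π/3..π/2, ((√3 * sin t - 1) ^ 2 - 1/2 * (√3 * cos t) ^ 2) * cos t
      = 1 - 9 * √3 / 16 := by
  have primitive (t : ℝ) : HasDerivAt (fun t => 3/2 * sin t ^ 3 - √3 * sin t ^ 2 - sin t / 2)
      (((√3 * sin t - 1) ^ 2 - 1/2 * (√3 * cos t) ^ 2) * cos t) t := by
    have hs := hasDerivAt_sin t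
    refine ((((hs.pow 3).const_mul (3/2)).sub ((hs.pow 2).const_mul √3)).sub
      (hs.div_const 2)).congr_deriv ?_
    push_cast
    linear_combination (3/2 * cos t) * sin_sq_add_cos_sq t
      - (sin t ^ 2 * cos t - 1/2 * cos t ^ 3) * sq_sqrt (zero_le_three (α := ℝ))
  rw [intervalIntegral.integral_eq_sub_of_hasDerivAt (fun t _ => primitive t)
    (Continuous.intervalIntegrable (by fun_prop) _ _)]
  simp only [sin_pi_div_three, sin_pi_div_two]
  linear_combination (√3/16) * sq_sqrt (zero_le_three (α := ℝ))

theorem Ffun_hReul : Ffun hReul hReul' = 1 - π/3 := by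
  have integrand : (fun t => (hReul t ^ 2 - (1/2) * hReul' t ^ 2) * cos t) = fun t =>
      if t ≤ π/3 then ((1 - cos t) ^ 2 - 1/2 * sin t ^ 2) * cos t
      else ((√3 * sin t - 1) ^ 2 - 1/2 * (√3 * cos t) ^ 2) * cos t := by
    funext t
    simp only [hReul, hReul']
    split_ifs <;> rfl
  rw [Ffun, integrand, intervalIntegral.integral_ite_le (by positivity) (by linarith [pi_pos])
    (Continuous.intervalIntegrable (by fun_prop) _ _)
    (Continuous.intervalIntegrable (by fun_prop) _ _),
    integral_reuleaux_first_arc, integral_reuleaux_second_arc]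
  ring

theorem abs_hReul_add_hReul'' (t : ℝ) : |hReul t + hReul'' t| = 1 := by
  unfold hReul hReul''
  split_ifs
  · rw [sub_add_cancel, abs_one]
  · rw [← sub_eq_add_neg, sub_sub_cancel_left, abs_neg, abs_one]

theorem w0_hReul : w0 hReul hReul'' = 1 := by
  simp only [w0, abs_hReul_add_hReul'']
  exact essSup_const 1 <| mt Measure.restrict_eq_zero.mp
    ((Measure.measure_Ioo_pos _).mpr (by linarith [pi_pos])).ne'

/-- The rotated Reuleaux triangle function `h_Reul` belongs to `E`, with
`F(h_Reul) = 1 − π/3`, `w₀(h_Reul) = 1`, and hence volume ratio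
`1 + 3 F(h_Reul)/w₀(h_Reul)² = 4 − π`. -/
theorem reuleaux_value :
    MemE hReul hReul' ∧
    (∀ᵐ t ∂(volume.restrict (Ioo (0:ℝ) (π/2))), HasDerivAt hReul' (hReul'' t) t) ∧
    Ffun hReul hReul' = 1 - π/3 ∧
    w0 hReul hReul'' = 1 ∧
    1 + 3 * Ffun hReul hReul' / (w0 hReul hReul'') ^ 2 = 4 - π := by
  refine ⟨memE_hReul, ae_hasDerivAt_hReul', Ffun_hReul, w0_hReul, ?_⟩
  rw [Ffun_hReul, w0_hReul]
  ring
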